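/- arXiv:1805.10752 — 5 statements merged into one kernel-verified Lean document; each statement's English description precedes it below -/
import Mathlib

section
/- For any a > 0, ∫_0^∞ e^{-s²} I₁(a s) ds = (1/a)(e^{a²/4} - 1), where I₁ is the modified Bessel function of the first kind of order 1. -/
open Real MeasureTheory

/-- The modified Bessel function of the first kind of order 1,
`I₁(x) = ∑_{m=0}^∞ (1/(m!(m+1)!)) (x/2)^{2m+1}`. -/
noncomputable def besselI1 (x : ℝ) : ℝ :=
  ∑' m : ℕ, (1 / (Nat.factorial m * Nat.factorial (m + 1)) : ℝ) * (x / 2) ^ (2 * m + 1)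

/-!
Integrate the power series of `I₁(a s)` term by term against `exp (-s²)`: the odd Gaussian
moments are `∫₀^∞ s^(2m+1) exp (-s²) ds = m!/2`, which cancels one factorial and leaves
`∑ (a/2)^(2m+1) / (2 (m+1)!) = (exp (a²/4) - 1) / a`. Fubini–Tonelli applies since the same
computation with `|a|` bounds the integrals of the absolute values.
-/

open Set Nat

lemma integrableOn_Ioi_pow_mul_exp_neg_sq (n : ℕ) :
    IntegrableOn (fun s : ℝ => s ^ n * exp (-s ^ 2)) (Ioi 0) := by
  simpa [rpow_natCast, rpow_two] using
    integrableOn_rpow_mul_exp_neg_rpow (s := n) (by linarith [n.cast_nonneg (α := ℝ)]) two_pos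

lemma integral_Ioi_odd_pow_mul_exp_neg_sq (n : ℕ) :
    ∫ s in Ioi (0 : ℝ), s ^ (2 * n + 1) * exp (-s ^ 2) = n ! / 2 := by
  have h := integral_rpow_mul_exp_neg_rpow (p := 2) (q := ((2 * n + 1 : ℕ) : ℝ)) two_pos
    (by linarith [(2 * n + 1 : ℕ).cast_nonneg (α := ℝ)])
  simp only [rpow_natCast, rpow_two] at h
  rw [h, show ((2 * n + 1 : ℕ) + 1 : ℝ) / 2 = n + 1 by push_cast; ring, Gamma_nat_eq_factorial]
  ring

theorem integral_Ioi_exp_neg_sq_mul_tsum_odd_pow {c : ℕ → ℝ}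
    (hc : Summable fun m => ‖c m‖ * m !) :
    ∫ s in Ioi (0 : ℝ), exp (-s ^ 2) * ∑' m, c m * s ^ (2 * m + 1)
      = ∑' m, c m * m ! / 2 := by
  set F : ℕ → ℝ → ℝ := fun m s => c m * (s ^ (2 * m + 1) * exp (-s ^ 2))
  have hF_int (m : ℕ) : ∫ s in Ioi (0 : ℝ), F m s = c m * m ! / 2 := by
    rw [integral_const_mul, integral_Ioi_odd_pow_mul_exp_neg_sq, mul_div_assoc]
  have hF_norm_int (m : ℕ) : ∫ s in Ioi (0 : ℝ), ‖F m s‖ = ‖c m‖ * m ! / 2 := by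
    rw [mul_div_assoc, ← integral_Ioi_odd_pow_mul_exp_neg_sq, ← integral_const_mul]
    refine setIntegral_congr_fun measurableSet_Ioi fun s (hs : 0 < s) => ?_
    rw [norm_mul, norm_of_nonneg (by positivity : 0 ≤ s ^ (2 * m + 1) * exp (-s ^ 2))]
  calc ∫ s in Ioi (0 : ℝ), exp (-s ^ 2) * ∑' m, c m * s ^ (2 * m + 1)
      = ∫ s in Ioi (0 : ℝ), ∑' m, F m s := by
        congr with s
        rw [← tsum_mul_left]
        exact tsum_congr fun m => by ring
    _ = ∑' m, ∫ s in Ioi (0 : ℝ), F m s := integral_tsum_of_summable_integral_norm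
        (fun m => (integrableOn_Ioi_pow_mul_exp_neg_sq (2 * m + 1)).const_mul (c m))
        ((hc.div_const 2).congr fun m => (hF_norm_int m).symm) |>.symm
    _ = ∑' m, c m * m ! / 2 := tsum_congr hF_int

lemma hasSum_odd_pow_div_factorial_succ (y : ℝ) :
    HasSum (fun m : ℕ => y ^ (2 * m + 1) / (m + 1)!) ((exp (y ^ 2) - 1) / y) := by
  rcases eq_or_ne y 0 with rfl | hy
  · simp [hasSum_zero]
  have h := (hasSum_nat_add_iff' 1).mpr (NormedSpace.expSeries_div_hasSum_exp (y ^ 2))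
  rw [← exp_eq_exp_ℝ, Finset.sum_range_one, pow_zero, factorial_zero, cast_one, div_one] at h
  refine (h.div_const y).congr_fun fun m => ?_
  field_simp
  ring

theorem stmt2_general (a : ℝ) :
    ∫ s in Set.Ioi (0 : ℝ), Real.exp (-s ^ 2) * besselI1 (a * s)
      = (1 / a) * (Real.exp (a ^ 2 / 4) - 1) := by
  set c : ℕ → ℝ := fun m => (a / 2) ^ (2 * m + 1) / (m ! * (m + 1)!)
  have hc (m : ℕ) : c m * m ! = (a / 2) ^ (2 * m + 1) / (m + 1)! := by
    simp only [c]
    field_simp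
  have hbessel (s : ℝ) : besselI1 (a * s) = ∑' m, c m * s ^ (2 * m + 1) := by
    refine tsum_congr fun m => ?_
    rw [mul_comm a, mul_div_right_comm, mul_pow]
    ring
  have hsum : Summable fun m => ‖c m‖ * m ! := by
    refine (hasSum_odd_pow_div_factorial_succ |a / 2|).summable.congr fun m => ?_
    symm
    rw [Real.norm_eq_abs, ← abs_of_nonneg (cast_nonneg (α := ℝ) m !), ← abs_mul, hc, abs_div,
      abs_pow, abs_of_nonneg (cast_nonneg (α := ℝ) _)]
  calc ∫ s in Ioi (0 : ℝ), exp (-s ^ 2) * besselI1 (a * s)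
      = ∑' m, c m * m ! / 2 := by
        simp_rw [hbessel]
        exact integral_Ioi_exp_neg_sq_mul_tsum_odd_pow hsum
    _ = ∑' m : ℕ, (a / 2) ^ (2 * m + 1) / (m + 1)! / 2 := by simp_rw [hc]
    _ = (exp ((a / 2) ^ 2) - 1) / (a / 2) / 2 :=
        ((hasSum_odd_pow_div_factorial_succ (a / 2)).div_const 2).tsum_eq
    _ = (1 / a) * (exp (a ^ 2 / 4) - 1) := by ring_nf

theorem stmt2 (a : ℝ) (ha : 0 < a) :
    ∫ s in Set.Ioi (0 : ℝ), Real.exp (-s ^ 2) * besselI1 (a * s)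
      = (1 / a) * (Real.exp (a ^ 2 / 4) - 1) :=
  stmt2_general a
end

section
/- Let α ∈ (0,1] and let m > 1. Define f(ρ) = ρ/(1+ρ) and g(ρ) = (1 + |ln(ρ/m)|)^{-α}/ρ for ρ > 0. Then there exists a unique ρ₀ > 0 with f(ρ₀) = g(ρ₀), and there is a constant C > 1 (depending only on α) such that for all sufficiently large m, C⁻¹ (ln m)^{-α/2} ≤ ρ₀ ≤ C (ln m)^{-α/2}. -/
open Real MeasureTheory

/-- The original fixed-point equation is equivalent to a polynomial-type equation. -/
lemma eqP_aux {α m ρ : ℝ} (hρ : 0 < ρ) :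
    (ρ / (1 + ρ) = (1 + |Real.log (ρ / m)|) ^ (-α) / ρ) ↔
      ρ ^ 2 * (1 + |Real.log (ρ / m)|) ^ α = 1 + ρ := by
  have hL : (0:ℝ) < 1 + |Real.log (ρ / m)| := by positivity
  have hB : (0:ℝ) < (1 + |Real.log (ρ / m)|) ^ α := Real.rpow_pos_of_pos hL α
  rw [sq, Real.rpow_neg hL.le,
    div_eq_div_iff (by positivity : (1:ℝ) + ρ ≠ 0) hρ.ne', inv_mul_eq_div,
    eq_div_iff hB.ne']

/-- Strict monotonicity of `ρ ↦ ρ (1 + log(m/ρ))^α` on `(0, m]`. -/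
lemma u_mono {α m x y : ℝ} (hα1 : 0 < α) (hα2 : α ≤ 1)
    (hx : 0 < x) (hxy : x < y) (hym : y ≤ m) :
    x * (1 + Real.log (m / x)) ^ α < y * (1 + Real.log (m / y)) ^ α := by
  have hy : 0 < y := hx.trans hxy
  have hm : 0 < m := hy.trans_le hym
  set a := Real.log (m / x) with ha
  set b := Real.log (m / y) with hb
  have hb0 : 0 ≤ b := Real.log_nonneg ((le_div_iff₀ hy).mpr (by linarith))
  have hab : b < a := by
    apply Real.log_lt_log (div_pos hm hy)
    exact div_lt_div_of_pos_left hm hx hxy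
  have h1b : (0:ℝ) < 1 + b := by linarith
  have h1a : (0:ℝ) < 1 + a := by linarith
  -- key : α * log(1+a) - α * log(1+b) < a - b
  have hq : (1:ℝ) < (1 + a) / (1 + b) := (one_lt_div h1b).mpr (by linarith)
  have h1 : Real.log ((1 + a) / (1 + b)) < (1 + a) / (1 + b) - 1 :=
    Real.log_lt_sub_one_of_pos (by positivity) (by linarith)
  have h2 : Real.log ((1 + a) / (1 + b)) = Real.log (1 + a) - Real.log (1 + b) :=
    Real.log_div h1a.ne' h1b.ne'
  have h3 : (1 + a) / (1 + b) - 1 ≤ a - b := by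
    rw [div_sub_one h1b.ne']
    have : (1 + a - (1 + b)) = a - b := by ring
    rw [this]
    exact div_le_self (by linarith) (by linarith)
  have hdiffpos : 0 < Real.log (1 + a) - Real.log (1 + b) := by
    have := Real.log_lt_log h1b (by linarith : 1 + b < 1 + a)
    linarith
  have key : α * Real.log (1 + a) - α * Real.log (1 + b) < a - b := by
    have : α * (Real.log (1 + a) - Real.log (1 + b)) ≤
        Real.log (1 + a) - Real.log (1 + b) := by nlinarith
    nlinarith [h2 ▸ h1]
  have hsub : a - b = Real.log y - Real.log x := by
    rw [ha, hb, Real.log_div hm.ne' hx.ne', Real.log_div hm.ne' hy.ne']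
    ring
  have hexp : Real.log x + Real.log (1 + a) * α < Real.log y + Real.log (1 + b) * α := by
    nlinarith [key, hsub]
  have ex : x * (1 + a) ^ α = Real.exp (Real.log x + Real.log (1 + a) * α) := by
    rw [Real.exp_add, Real.exp_log hx, Real.rpow_def_of_pos h1a]
  have ey : y * (1 + b) ^ α = Real.exp (Real.log y + Real.log (1 + b) * α) := by
    rw [Real.exp_add, Real.exp_log hy, Real.rpow_def_of_pos h1b]
  rw [ex, ey]
  exact Real.exp_lt_exp.mpr hexp

/-- The function `h ρ = ρ² (1+|log(ρ/m)|)^α / (1+ρ)` is strictly increasing on `(0,∞)`. -/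
lemma h_mono {α m : ℝ} (hα1 : 0 < α) (hα2 : α ≤ 1) (hm : 1 < m) {x y : ℝ}
    (hx : 0 < x) (hxy : x < y) :
    x ^ 2 * (1 + |Real.log (x / m)|) ^ α / (1 + x) <
      y ^ 2 * (1 + |Real.log (y / m)|) ^ α / (1 + y) := by
  have hm0 : (0:ℝ) < m := by linarith
  have hy : 0 < y := hx.trans hxy
  -- rewrite on (0, m]
  have hle : ∀ ρ : ℝ, 0 < ρ → ρ ≤ m →
      ρ ^ 2 * (1 + |Real.log (ρ / m)|) ^ α / (1 + ρ) =
        (ρ / (1 + ρ)) * (ρ * (1 + Real.log (m / ρ)) ^ α) := by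
    intro ρ hρ hρm
    have h1 : Real.log (ρ / m) ≤ 0 :=
      Real.log_nonpos (by positivity) ((div_le_one hm0).mpr hρm)
    have h2 : |Real.log (ρ / m)| = Real.log (m / ρ) := by
      rw [abs_of_nonpos h1, ← Real.log_inv, inv_div]
    rw [h2]; ring
  -- rewrite on [m, ∞)
  have hge : ∀ ρ : ℝ, m ≤ ρ →
      ρ ^ 2 * (1 + |Real.log (ρ / m)|) ^ α / (1 + ρ) =
        (ρ ^ 2 / (1 + ρ)) * (1 + Real.log (ρ / m)) ^ α := by
    intro ρ hρm
    have h1 : 0 ≤ Real.log (ρ / m) := Real.log_nonneg ((one_le_div hm0).mpr hρm)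
    rw [abs_of_nonneg h1]; ring
  have mono1 : ∀ u v : ℝ, 0 < u → u < v → v ≤ m →
      u ^ 2 * (1 + |Real.log (u / m)|) ^ α / (1 + u) <
        v ^ 2 * (1 + |Real.log (v / m)|) ^ α / (1 + v) := by
    intro u v hu huv hvm
    have hv : 0 < u := hu
    rw [hle u hu (le_of_lt (lt_of_lt_of_le huv hvm)), hle v (hu.trans huv) hvm]
    have hf : u / (1 + u) < v / (1 + v) := by
      rw [div_lt_div_iff₀ (by linarith) (by linarith)]
      nlinarith
    have hu2 : u * (1 + Real.log (m / u)) ^ α < v * (1 + Real.log (m / v)) ^ α :=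
      u_mono hα1 hα2 hu huv hvm
    apply mul_lt_mul'' hf hu2 (by positivity)
    have hmu : 0 < m / u := div_pos hm0 hu
    have : (1:ℝ) ≤ m / u := (one_le_div hu).mpr (by linarith [lt_of_lt_of_le huv hvm])
    have hlog : 0 ≤ Real.log (m / u) := Real.log_nonneg this
    positivity
  have mono2 : ∀ u v : ℝ, m ≤ u → u < v →
      u ^ 2 * (1 + |Real.log (u / m)|) ^ α / (1 + u) <
        v ^ 2 * (1 + |Real.log (v / m)|) ^ α / (1 + v) := by
    intro u v hmu huv
    have hu : 0 < u := hm0.trans_le hmu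
    have hv : 0 < v := hu.trans huv
    rw [hge u hmu, hge v (hmu.trans huv.le)]
    have hA : u ^ 2 / (1 + u) < v ^ 2 / (1 + v) := by
      rw [div_lt_div_iff₀ (by linarith) (by linarith)]
      have hkey : 0 < (v - u) * (u + v + u * v) := by
        apply mul_pos (by linarith)
        nlinarith
      nlinarith [hkey]
    have hlogu : 0 ≤ Real.log (u / m) := Real.log_nonneg ((one_le_div hm0).mpr hmu)
    have hlog2 : Real.log (u / m) ≤ Real.log (v / m) :=
      Real.log_le_log (div_pos hu hm0) (by gcongr)
    have hB : (1 + Real.log (u / m)) ^ α ≤ (1 + Real.log (v / m)) ^ α :=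
      Real.rpow_le_rpow (by linarith) (by linarith) hα1.le
    have hBu_pos : (0:ℝ) < (1 + Real.log (u / m)) ^ α :=
      Real.rpow_pos_of_pos (by linarith) α
    calc u ^ 2 / (1 + u) * (1 + Real.log (u / m)) ^ α
        ≤ u ^ 2 / (1 + u) * (1 + Real.log (v / m)) ^ α :=
          mul_le_mul_of_nonneg_left hB (by positivity)
      _ < v ^ 2 / (1 + v) * (1 + Real.log (v / m)) ^ α :=
          mul_lt_mul_of_pos_right hA (lt_of_lt_of_le hBu_pos hB)
  rcases le_or_gt y m with hym | hym
  · exact mono1 x y hx hxy hym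
  · rcases le_or_gt m x with hmx | hmx
    · exact mono2 x y hmx hxy
    · exact lt_trans (mono1 x m hx hmx le_rfl) (mono2 m y le_rfl hym)

theorem stmt7 (α : ℝ) (hα1 : 0 < α) (hα2 : α ≤ 1) :
    (∀ m : ℝ, 1 < m →
      ∃! ρ₀ : ℝ, 0 < ρ₀ ∧
        ρ₀ / (1 + ρ₀) = (1 + |Real.log (ρ₀ / m)|) ^ (-α) / ρ₀) ∧
    ∃ C : ℝ, 1 < C ∧ ∃ M : ℝ, ∀ m : ℝ, M ≤ m → 1 < m →
      ∀ ρ₀ : ℝ, 0 < ρ₀ →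
        ρ₀ / (1 + ρ₀) = (1 + |Real.log (ρ₀ / m)|) ^ (-α) / ρ₀ →
        C⁻¹ * Real.log m ^ (-α / 2) ≤ ρ₀ ∧ ρ₀ ≤ C * Real.log m ^ (-α / 2) := by
  constructor
  · -- existence and uniqueness
    intro m hm
    have hm0 : (0:ℝ) < m := by linarith
    set h : ℝ → ℝ := fun ρ => ρ ^ 2 * (1 + |Real.log (ρ / m)|) ^ α / (1 + ρ) with hh
    have hcont : ContinuousOn h (Set.Icc (1/m) (m+3)) := by
      have hsub : ∀ ρ ∈ Set.Icc (1/m) (m+3), (0:ℝ) < ρ := fun ρ hρ =>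
        lt_of_lt_of_le (by positivity) hρ.1
      apply ContinuousOn.div
      · apply ContinuousOn.mul ((continuous_pow 2).continuousOn)
        apply ContinuousOn.rpow_const
        · apply ContinuousOn.add continuousOn_const
          apply ContinuousOn.abs
          apply ContinuousOn.log (continuousOn_id.div_const m)
          intro ρ hρ
          exact div_ne_zero (hsub ρ hρ).ne' hm0.ne'
        · exact fun ρ hρ => Or.inr hα1.le
      · exact (continuous_const.add continuous_id).continuousOn
      · intro ρ hρ
        have := hsub ρ hρ
        positivity
    have hab : 1/m ≤ m + 3 := by
      have : 1/m < 1 := (div_lt_one hm0).mpr hm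
      linarith
    have hlogm : 0 < Real.log m := Real.log_pos hm
    -- value at 1/m is < 1
    have ha : h (1/m) < 1 := by
      have e1 : Real.log ((1/m)/m) = -(2 * Real.log m) := by
        rw [div_div, one_div, Real.log_inv, Real.log_mul hm0.ne' hm0.ne']
        ring
      have e2 : |Real.log ((1/m)/m)| = 2 * Real.log m := by
        rw [e1, abs_neg, abs_of_nonneg (by linarith)]
      have hbase : (1:ℝ) ≤ 1 + 2 * Real.log m := by linarith
      have hr1 : (1 + 2 * Real.log m) ^ α ≤ 1 + 2 * Real.log m := by
        calc (1 + 2 * Real.log m) ^ α ≤ (1 + 2 * Real.log m) ^ (1:ℝ) :=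
              Real.rpow_le_rpow_of_exponent_le hbase hα2
          _ = 1 + 2 * Real.log m := Real.rpow_one _
      have hr2 : 1 + 2 * Real.log m ≤ m ^ 2 := by
        have h1 : Real.log (m ^ 2) ≤ m ^ 2 - 1 := Real.log_le_sub_one_of_pos (by positivity)
        rw [Real.log_pow] at h1
        push_cast at h1
        linarith
      have hnum : (1/m) ^ 2 * (1 + 2 * Real.log m) ^ α ≤ 1 := by
        calc (1/m) ^ 2 * (1 + 2 * Real.log m) ^ α ≤ (1/m) ^ 2 * m ^ 2 :=
              mul_le_mul_of_nonneg_left (hr1.trans hr2) (by positivity)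
          _ = 1 := by field_simp
      have hden : (1:ℝ) < 1 + 1/m := by
        have : (0:ℝ) < 1/m := by positivity
        linarith
      show (1/m) ^ 2 * (1 + |Real.log ((1/m)/m)|) ^ α / (1 + 1/m) < 1
      rw [e2, div_lt_one (by linarith)]
      linarith
    -- value at m+3 is ≥ 1
    have hb : 1 ≤ h (m+3) := by
      have hL0 : 0 ≤ Real.log ((m+3)/m) :=
        Real.log_nonneg ((one_le_div hm0).mpr (by linarith))
      have hB1 : (1:ℝ) ≤ (1 + |Real.log ((m+3)/m)|) ^ α :=
        Real.one_le_rpow (by rw [abs_of_nonneg hL0]; linarith) hα1.le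
      show (1:ℝ) ≤ (m+3) ^ 2 * (1 + |Real.log ((m+3)/m)|) ^ α / (1 + (m+3))
      rw [le_div_iff₀ (by linarith)]
      calc 1 * (1 + (m+3)) = m + 4 := by ring
        _ ≤ (m+3) ^ 2 := by nlinarith
        _ = (m+3) ^ 2 * 1 := by ring
        _ ≤ (m+3) ^ 2 * (1 + |Real.log ((m+3)/m)|) ^ α :=
            mul_le_mul_of_nonneg_left hB1 (by positivity)
    obtain ⟨ρ₀, hmem, hval⟩ := intermediate_value_Icc hab hcont ⟨ha.le, hb⟩
    have hρ0 : 0 < ρ₀ := lt_of_lt_of_le (by positivity) hmem.1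
    have hone : ∀ ρ : ℝ, 0 < ρ →
        (ρ / (1 + ρ) = (1 + |Real.log (ρ / m)|) ^ (-α) / ρ ↔ h ρ = 1) := by
      intro ρ hρ
      rw [eqP_aux hρ, hh]
      simp only
      rw [div_eq_one_iff_eq (by positivity : (1:ℝ) + ρ ≠ 0)]
    refine ⟨ρ₀, ⟨hρ0, (hone ρ₀ hρ0).mpr hval⟩, ?_⟩
    rintro y ⟨hy0, hyeq⟩
    have hyval : h y = 1 := (hone y hy0).mp hyeq
    rcases lt_trichotomy y ρ₀ with hlt | heq | hgt
    · exfalso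
      have h1 : h y < h ρ₀ := h_mono hα1 hα2 hm hy0 hlt
      rw [hyval, hval] at h1
      exact lt_irrefl 1 h1
    · exact heq
    · exfalso
      have h1 : h ρ₀ < h y := h_mono hα1 hα2 hm hρ0 hgt
      rw [hyval, hval] at h1
      exact lt_irrefl 1 h1
  · -- quantitative bounds
    refine ⟨2, one_lt_two, Real.exp (2 * (3:ℝ) ^ (α⁻¹)), ?_⟩
    intro m hMm hm ρ₀ hρ0 heq
    have hP : ρ₀ ^ 2 * (1 + |Real.log (ρ₀ / m)|) ^ α = 1 + ρ₀ := (eqP_aux hρ0).mp heq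
    have hm0 : (0:ℝ) < m := by linarith
    set t := Real.log m with hts
    have h1α : (1:ℝ) ≤ α⁻¹ := (one_le_inv₀ hα1).mpr hα2
    have h3 : (3:ℝ) ≤ (3:ℝ) ^ (α⁻¹) := by
      calc (3:ℝ) = 3 ^ (1:ℝ) := (Real.rpow_one 3).symm
        _ ≤ 3 ^ (α⁻¹) := Real.rpow_le_rpow_of_exponent_le (by norm_num) h1α
    have ht : 2 * (3:ℝ) ^ (α⁻¹) ≤ t := by
      rw [hts]
      calc 2 * (3:ℝ) ^ (α⁻¹) = Real.log (Real.exp (2 * (3:ℝ) ^ (α⁻¹))) :=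
            (Real.log_exp _).symm
        _ ≤ Real.log m := Real.log_le_log (Real.exp_pos _) hMm
    have ht6 : 6 ≤ t := by linarith
    have ht0 : 0 < t := by linarith
    set L := |Real.log (ρ₀ / m)| with hLs
    have hL0 : 0 ≤ L := abs_nonneg _
    have hone_le : (1:ℝ) ≤ 1 + L := by linarith
    have hBL1 : (1:ℝ) ≤ (1 + L) ^ α := Real.one_le_rpow hone_le hα1.le
    have hBL0 : (0:ℝ) < (1 + L) ^ α := Real.rpow_pos_of_pos (by linarith) α
    have hlogdiv : Real.log (ρ₀ / m) = Real.log ρ₀ - t := by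
      rw [hts, Real.log_div hρ0.ne' hm0.ne']
    -- Step A : ρ₀ < 1
    have hρlt1 : ρ₀ < 1 := by
      by_contra h1
      push_neg at h1
      have hsq : ρ₀ ^ 2 ≤ 1 + ρ₀ := by
        have hx := mul_le_mul_of_nonneg_left hBL1 (sq_nonneg ρ₀)
        rw [mul_one] at hx
        linarith [hP]
      have h2 : ρ₀ < 2 := by nlinarith
      have hlogρ : Real.log ρ₀ ≤ 1 := by
        have := Real.log_le_sub_one_of_pos hρ0
        linarith
      have hLeq : L = t - Real.log ρ₀ := by
        rw [hLs, hlogdiv, abs_of_nonpos (by linarith)]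
        ring
      have h1L : (3:ℝ) ^ (α⁻¹) ≤ 1 + L := by
        rw [hLeq]; linarith
      have hpow3 : ((3:ℝ) ^ (α⁻¹)) ^ α = 3 := by
        rw [← Real.rpow_mul (by norm_num : (0:ℝ) ≤ 3), inv_mul_cancel₀ hα1.ne',
          Real.rpow_one]
      have hpow : (3:ℝ) ≤ (1 + L) ^ α := by
        rw [← hpow3]
        exact Real.rpow_le_rpow (by positivity) h1L hα1.le
      have hbig : (1:ℝ) * 3 ≤ ρ₀ ^ 2 * (1 + L) ^ α :=
        mul_le_mul (by nlinarith) hpow (by norm_num) (by positivity)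
      linarith [hP ▸ hbig]
    have hlρneg : Real.log ρ₀ < 0 := Real.log_neg hρ0 hρlt1
    -- Step B : -t < log ρ₀
    have hρgt : -t < Real.log ρ₀ := by
      by_contra hB'
      push_neg at hB'
      set s := -Real.log ρ₀ with hss
      have hst : t ≤ s := by rw [hss]; linarith
      have hs0 : 0 < s := by linarith
      have hLeq : L = s + t := by
        rw [hLs, hlogdiv, abs_of_nonpos (by linarith)]
        rw [hss]; ring
      have hBle : (1 + L) ^ α ≤ 1 + 2 * s := by
        calc (1 + L) ^ α ≤ (1 + L) ^ (1:ℝ) :=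
              Real.rpow_le_rpow_of_exponent_le hone_le hα2
          _ = 1 + L := Real.rpow_one _
          _ ≤ 1 + 2 * s := by rw [hLeq]; linarith
      have hρe : ρ₀ = Real.exp (-s) := by
        rw [hss, neg_neg, Real.exp_log hρ0]
      have hρsq : ρ₀ ^ 2 = Real.exp (-(2 * s)) := by
        rw [hρe, sq, ← Real.exp_add]
        ring_nf
      have hexp : 2 * s + 1 < Real.exp (2 * s) := Real.add_one_lt_exp (by positivity)
      have hkey : ρ₀ ^ 2 * (1 + L) ^ α < 1 := by
        calc ρ₀ ^ 2 * (1 + L) ^ α ≤ ρ₀ ^ 2 * (1 + 2 * s) :=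
              mul_le_mul_of_nonneg_left hBle (sq_nonneg _)
          _ = Real.exp (-(2 * s)) * (1 + 2 * s) := by rw [hρsq]
          _ < Real.exp (-(2 * s)) * Real.exp (2 * s) := by
              apply mul_lt_mul_of_pos_left (by linarith) (Real.exp_pos _)
          _ = 1 := by rw [← Real.exp_add]; norm_num
      linarith [hP ▸ hkey]
    -- Step C : the bounds
    have hLeq : L = t - Real.log ρ₀ := by
      rw [hLs, hlogdiv, abs_of_nonpos (by linarith)]
      ring
    have hLt : t ≤ L := by rw [hLeq]; linarith
    have hL2 : L ≤ 2 * t := by rw [hLeq]; linarith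
    have hc0 : (0:ℝ) < t ^ (-α/2) := Real.rpow_pos_of_pos ht0 _
    constructor
    · -- lower bound
      have h1 : (1 + L) ^ α ≤ (3 * t) ^ α :=
        Real.rpow_le_rpow (by linarith) (by linarith) hα1.le
      have hA : (0:ℝ) < (3 * t) ^ α := Real.rpow_pos_of_pos (by linarith) α
      have h2 : (1:ℝ) ≤ ρ₀ ^ 2 * (3 * t) ^ α := by
        have hx := mul_le_mul_of_nonneg_left h1 (sq_nonneg ρ₀)
        linarith [hP]
      have hinv : ((3 * t) ^ α)⁻¹ ≤ ρ₀ ^ 2 := by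
        rw [inv_eq_one_div, div_le_iff₀ hA]
        linarith
      have e3 : (3 * t) ^ (-α/2) * (3 * t) ^ (-α/2) = ((3 * t) ^ α)⁻¹ := by
        rw [← Real.rpow_add (by linarith : (0:ℝ) < 3 * t),
          show -α/2 + -α/2 = -α by ring, Real.rpow_neg (by linarith : (0:ℝ) ≤ 3 * t)]
      have e4 : 2⁻¹ * t ^ (-α/2) ≤ (3 * t) ^ (-α/2) := by
        rw [Real.mul_rpow (by norm_num : (0:ℝ) ≤ 3) ht0.le]
        apply mul_le_mul_of_nonneg_right _ hc0.le
        have hs1 : (3:ℝ) ^ (α/2) ≤ 3 ^ ((1:ℝ)/2) :=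
          Real.rpow_le_rpow_of_exponent_le (by norm_num) (by linarith)
        have hs2 : (3:ℝ) ^ ((1:ℝ)/2) ≤ 2 := by
          rw [← Real.sqrt_eq_rpow]
          have h34 : Real.sqrt 3 ≤ Real.sqrt 4 := Real.sqrt_le_sqrt (by norm_num)
          have h4 : Real.sqrt 4 = 2 := by
            rw [show (4:ℝ) = 2 ^ 2 by norm_num, Real.sqrt_sq (by norm_num)]
          linarith
        have hs3 : (0:ℝ) < 3 ^ (α/2) := Real.rpow_pos_of_pos (by norm_num) _
        rw [show -α/2 = -(α/2) by ring, Real.rpow_neg (by norm_num : (0:ℝ) ≤ 3)]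
        exact inv_anti₀ hs3 (hs1.trans hs2)
      have hfin : (2⁻¹ * t ^ (-α/2)) * (2⁻¹ * t ^ (-α/2)) ≤ ρ₀ ^ 2 := by
        calc (2⁻¹ * t ^ (-α/2)) * (2⁻¹ * t ^ (-α/2))
            ≤ (3 * t) ^ (-α/2) * (3 * t) ^ (-α/2) :=
              mul_le_mul e4 e4 (by positivity) (by positivity)
          _ = ((3 * t) ^ α)⁻¹ := e3
          _ ≤ ρ₀ ^ 2 := hinv
      by_contra hcon
      push_neg at hcon
      have hlt : ρ₀ ^ 2 < (2⁻¹ * t ^ (-α/2)) * (2⁻¹ * t ^ (-α/2)) := by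
        rw [sq]
        exact mul_lt_mul'' hcon hcon hρ0.le hρ0.le
      linarith [hfin]
    · -- upper bound
      have h1 : t ^ α ≤ (1 + L) ^ α :=
        Real.rpow_le_rpow ht0.le (by linarith) hα1.le
      have htα : 0 < t ^ α := Real.rpow_pos_of_pos ht0 α
      have h2 : ρ₀ ^ 2 * t ^ α ≤ 2 := by
        have hx := mul_le_mul_of_nonneg_left h1 (sq_nonneg ρ₀)
        linarith [hP]
      have hhalf : t ^ (-α/2) * t ^ (-α/2) = (t ^ α)⁻¹ := by
        rw [← Real.rpow_add ht0, show -α/2 + -α/2 = -α by ring,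
          Real.rpow_neg ht0.le]
      have hρsq : ρ₀ ^ 2 ≤ 2 * (t ^ (-α/2) * t ^ (-α/2)) := by
        rw [hhalf, inv_eq_one_div, mul_comm, div_mul_eq_mul_div, le_div_iff₀ htα]
        linarith
      by_contra hcon
      push_neg at hcon
      have hlt : (2 * t ^ (-α/2)) * (2 * t ^ (-α/2)) < ρ₀ ^ 2 := by
        rw [sq]
        exact mul_lt_mul'' hcon hcon (by positivity) (by positivity)
      nlinarith [hρsq, mul_pos hc0 hc0]
end

section
/- Let α ∈ (0,1] and δ₁ > 0. Then there is a constant C = C(α, δ₁) such that for all sufficiently large m > 1, with ρ₀ := (ln m)^{-α/2}, one has ∫_{ρ₀}^{1} (1 + ln(m/ρ))^{-α} / ρ dρ ≤ C (ln m)^{-α + δ₁}. -/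
open Real MeasureTheory

theorem stmt8 (α δ₁ : ℝ) (hα1 : 0 < α) (hα2 : α ≤ 1) (hδ : 0 < δ₁) :
    ∃ C : ℝ, 0 < C ∧ ∃ M : ℝ, ∀ m : ℝ, M ≤ m → 1 < m →
      ∫ ρ in (Real.log m ^ (-α / 2) : ℝ)..1, (1 + Real.log (m / ρ)) ^ (-α) / ρ
        ≤ C * Real.log m ^ (-α + δ₁) := by
  refine ⟨α / (2 * δ₁), by positivity, Real.exp (Real.exp 1), fun m hM hm => ?_⟩
  set L := Real.log m with hLdef
  have hL : Real.exp 1 ≤ L := by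
    rw [hLdef, ← Real.log_exp (Real.exp 1)]
    exact Real.log_le_log (Real.exp_pos _) hM
  have hL1 : 1 < L := lt_of_lt_of_le (by linarith [Real.add_one_le_exp (1:ℝ)]) hL
  have hL0 : 0 < L := by linarith
  set ρ₀ : ℝ := L ^ (-α / 2) with hρ₀def
  have hρ₀pos : 0 < ρ₀ := Real.rpow_pos_of_pos hL0 _
  have hρ₀le : ρ₀ ≤ 1 := Real.rpow_le_one_of_one_le_of_nonpos hL1.le (by linarith)
  have hm0 : 0 < m := by linarith
  -- pointwise bound on [ρ₀, 1]
  have hbound : ∀ x ∈ Set.Icc ρ₀ 1,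
      (1 + Real.log (m / x)) ^ (-α) / x ≤ L ^ (-α) * (1 / x) := by
    intro x hx
    have hx0 : 0 < x := lt_of_lt_of_le hρ₀pos hx.1
    have hlogx : Real.log x ≤ 0 := Real.log_nonpos hx0.le hx.2
    have hlog : L ≤ 1 + Real.log (m / x) := by
      rw [Real.log_div (ne_of_gt hm0) (ne_of_gt hx0)]
      linarith
    have := Real.rpow_le_rpow_of_nonpos hL0 hlog (by linarith : -α ≤ 0)
    rw [mul_one_div]
    exact div_le_div_of_nonneg_right this hx0.le
  -- integrability
  have hcont : ContinuousOn (fun x => (1 + Real.log (m / x)) ^ (-α) / x) (Set.Icc ρ₀ 1) := by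
    apply ContinuousOn.div
    · apply ContinuousOn.rpow_const
      · exact continuousOn_const.add ((Real.continuousOn_log.comp
          (continuousOn_const.div continuousOn_id (fun x hx =>
            ne_of_gt (lt_of_lt_of_le hρ₀pos hx.1))) (fun x hx => by
              have hx0 : 0 < x := lt_of_lt_of_le hρ₀pos hx.1
              exact ne_of_gt (div_pos hm0 hx0))))
      · intro x hx
        left
        have hx0 : 0 < x := lt_of_lt_of_le hρ₀pos hx.1
        have hlogx : Real.log x ≤ 0 := Real.log_nonpos hx0.le hx.2
        rw [Real.log_div (ne_of_gt hm0) (ne_of_gt hx0)]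
        intro h
        nlinarith [Real.log_nonneg hm.le]
    · exact continuousOn_id
    · exact fun x hx => ne_of_gt (lt_of_lt_of_le hρ₀pos hx.1)
  have hcont2 : ContinuousOn (fun x : ℝ => L ^ (-α) * (1 / x)) (Set.Icc ρ₀ 1) :=
    continuousOn_const.mul (continuousOn_const.div continuousOn_id
      (fun x hx => ne_of_gt (lt_of_lt_of_le hρ₀pos hx.1)))
  have hint1 : IntervalIntegrable (fun x => (1 + Real.log (m / x)) ^ (-α) / x) volume ρ₀ 1 :=
    (hcont.mono (Set.uIcc_of_le hρ₀le).subset).intervalIntegrable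
  have hint2 : IntervalIntegrable (fun x : ℝ => L ^ (-α) * (1 / x)) volume ρ₀ 1 :=
    (hcont2.mono (Set.uIcc_of_le hρ₀le).subset).intervalIntegrable
  have hmono := intervalIntegral.integral_mono_on hρ₀le hint1 hint2 hbound
  -- compute the right integral
  have hcalc : ∫ x in ρ₀..1, L ^ (-α) * (1 / x) = L ^ (-α) * (α / 2 * Real.log L) := by
    rw [intervalIntegral.integral_const_mul, integral_one_div
      (fun h => (ne_of_gt hρ₀pos) (by
        rcases Set.mem_uIcc.mp h with h | h
        · linarith [h.1, h.2]
        · linarith [h.1, h.2]))]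
    rw [hρ₀def, one_div, Real.log_inv, Real.log_rpow hL0]
    ring
  have hloglog : Real.log L ≤ L ^ δ₁ / δ₁ := Real.log_le_rpow_div hL0.le hδ
  have hfinal : L ^ (-α) * (α / 2 * Real.log L) ≤ α / (2 * δ₁) * L ^ (-α + δ₁) := by
    rw [Real.rpow_add hL0]
    have hLα : 0 < L ^ (-α) := Real.rpow_pos_of_pos hL0 _
    have h1 : α / 2 * Real.log L ≤ α / 2 * (L ^ δ₁ / δ₁) :=
      mul_le_mul_of_nonneg_left hloglog (by positivity)
    calc L ^ (-α) * (α / 2 * Real.log L) ≤ L ^ (-α) * (α / 2 * (L ^ δ₁ / δ₁)) :=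
          mul_le_mul_of_nonneg_left h1 hLα.le
      _ = α / (2 * δ₁) * (L ^ (-α) * L ^ δ₁) := by ring
  calc _ ≤ ∫ x in ρ₀..1, L ^ (-α) * (1 / x) := hmono
    _ = L ^ (-α) * (α / 2 * Real.log L) := hcalc
    _ ≤ _ := hfinal
end

section
/- Let G(t; r, ρ, ζ) = (4√π t^{3/2})⁻¹ exp(-(r² + ρ² + ζ²)/(4t)) I₁(rρ/(2t)) for t, r, ρ > 0 and ζ ∈ ℝ. Then for each fixed r > 0 and t > 0, ∫_{-∞}^{∞} ∫_0^∞ |∂_ζ G(t; r, ρ, ζ)| dρ dζ ≤ (C/(r√t))(1 - e^{-r²/(4t)}) for some absolute constant C. -/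
/-! Since `∂_ζ G = -(ζ/(2t)) G` and `G ≥ 0`, the `ρ`-integral of `|∂_ζ G|` is `|ζ|/(2t)` times
that of `G`. Integrating the power series of `I₁` term by term against the Gaussian (all terms
are nonnegative) gives `∫_0^∞ e^{-bρ²} I₁(cρ) dρ = (e^{c²/(4b)} - 1)/c`, so the `ρ`-integral is an
explicit multiple of `|ζ| e^{-ζ²/(4t)}`, whose integral over `ℝ` is `4t`. The bound holds with
equality for `C = 1/√π`. -/

open Real MeasureTheory

/-- The heat kernel of `∂_t - (Δ - 1/r²)` in the axially symmetric setting. -/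
noncomputable def G (t r ρ ζ : ℝ) : ℝ :=
  (4 * Real.sqrt π * t ^ ((3 : ℝ) / 2))⁻¹ *
    Real.exp (-(r ^ 2 + ρ ^ 2 + ζ ^ 2) / (4 * t)) * besselI1 (r * ρ / (2 * t))

open Set Nat

lemma Real.hasSum_pow_succ_div_factorial (x : ℝ) :
    HasSum (fun m : ℕ => x ^ (m + 1) / (m + 1)!) (exp x - 1) := by
  have h := NormedSpace.expSeries_div_hasSum_exp x
  rw [← Real.exp_eq_exp_ℝ] at h
  simpa using (hasSum_nat_add_iff' 1).mpr h

lemma integrableOn_pow_mul_exp_neg_mul_sq (n : ℕ) {b : ℝ} (hb : 0 < b) :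
    IntegrableOn (fun x : ℝ => x ^ n * exp (-b * x ^ 2)) (Ioi 0) := by
  refine (integrableOn_rpow_mul_exp_neg_mul_sq hb (s := n)
    (by linarith [n.cast_nonneg (α := ℝ)])).congr_fun (fun x _ => ?_) measurableSet_Ioi
  simp only [rpow_natCast]

lemma integral_Ioi_pow_mul_exp_neg_mul_sq_odd (n : ℕ) {b : ℝ} (hb : 0 < b) :
    ∫ x in Ioi (0 : ℝ), x ^ (2 * n + 1) * exp (-b * x ^ 2) = n ! / (2 * b ^ (n + 1)) := by
  have h := integral_rpow_mul_exp_neg_mul_rpow (p := 2) (q := (2 * n + 1 : ℕ)) two_pos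
    (by linarith [(2 * n + 1 : ℕ).cast_nonneg (α := ℝ)]) hb
  simp only [rpow_natCast, rpow_two] at h
  rw [h, neg_div, show ((2 * n + 1 : ℕ) + 1 : ℝ) / 2 = (n + 1 : ℕ) by push_cast; ring,
    rpow_neg hb.le, rpow_natCast, cast_succ, Real.Gamma_nat_eq_factorial]
  field_simp

lemma integral_abs_mul_exp_neg_mul_sq {b : ℝ} (hb : 0 < b) :
    ∫ x : ℝ, |x| * exp (-b * x ^ 2) = 1 / b := by
  have h := integral_comp_abs (f := fun x : ℝ => x * exp (-b * x ^ 2))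
  simp only [sq_abs] at h
  have h0 := integral_Ioi_pow_mul_exp_neg_mul_sq_odd 0 hb
  simp only [mul_zero, zero_add, pow_one, factorial_zero, cast_one] at h0
  rw [h, h0]
  field_simp

lemma besselI1_nonneg {x : ℝ} (hx : 0 ≤ x) : 0 ≤ besselI1 x :=
  tsum_nonneg fun m => by positivity

lemma integral_exp_neg_mul_sq_mul_besselI1 {b c : ℝ} (hb : 0 < b) (hc : 0 < c) :
    ∫ x in Ioi (0 : ℝ), exp (-b * x ^ 2) * besselI1 (c * x)
      = (exp (c ^ 2 / (4 * b)) - 1) / c := by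
  set F : ℕ → ℝ → ℝ := fun m x =>
    (1 / (m ! * (m + 1)!) : ℝ) * (c / 2) ^ (2 * m + 1) * (x ^ (2 * m + 1) * exp (-b * x ^ 2))
  have hF_int : ∀ m, IntegrableOn (F m) (Ioi 0) := fun m =>
    (integrableOn_pow_mul_exp_neg_mul_sq _ hb).const_mul _
  have hF_integral :
      ∀ m, ∫ x in Ioi (0 : ℝ), F m x = (c ^ 2 / (4 * b)) ^ (m + 1) / (m + 1)! / c := by
    intro m
    simp only [F, integral_const_mul, integral_Ioi_pow_mul_exp_neg_mul_sq_odd m hb,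
      factorial_succ, cast_mul, div_pow, mul_pow, ← pow_mul]
    field_simp
    rw [show (4 : ℝ) = 2 ^ 2 by norm_num, ← pow_mul]
    ring
  have hF_norm : ∀ m, ∫ x in Ioi (0 : ℝ), ‖F m x‖ = ∫ x in Ioi (0 : ℝ), F m x := fun m =>
    setIntegral_congr_fun measurableSet_Ioi fun x (hx : 0 < x) => norm_of_nonneg (by positivity)
  have h_series :
      HasSum (fun m => ∫ x in Ioi (0 : ℝ), F m x) ((exp (c ^ 2 / (4 * b)) - 1) / c) := by
    simpa only [hF_integral] using (hasSum_pow_succ_div_factorial _).div_const c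
  have h_termwise := hasSum_integral_of_summable_integral_norm hF_int
    (by simpa only [hF_norm] using h_series.summable)
  have h_pointwise : ∀ x, exp (-b * x ^ 2) * besselI1 (c * x) = ∑' m, F m x := by
    intro x
    rw [besselI1, ← tsum_mul_left]
    congr 1 with m
    rw [show c * x / 2 = c / 2 * x by ring, mul_pow]
    ring
  simp only [h_pointwise]
  exact h_termwise.unique h_series

lemma hasDerivAt_G (t r ρ ζ : ℝ) : HasDerivAt (G t r ρ) (-(ζ / (2 * t)) * G t r ρ ζ) ζ := by
  have h :
      HasDerivAt (fun ζ' : ℝ => -(r ^ 2 + ρ ^ 2 + ζ' ^ 2) / (4 * t)) (-(2 * ζ) / (4 * t)) ζ :=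
    (((hasDerivAt_pow 2 ζ).const_add (r ^ 2 + ρ ^ 2)).neg.div_const (4 * t)).congr_deriv (by ring)
  exact ((h.exp.const_mul _).mul_const _).congr_deriv (by unfold G; ring)

lemma G_nonneg {t r ρ ζ : ℝ} (ht : 0 ≤ t) (hr : 0 ≤ r) (hρ : 0 ≤ ρ) : 0 ≤ G t r ρ ζ := by
  have := besselI1_nonneg (x := r * ρ / (2 * t)) (by positivity)
  unfold G
  positivity

lemma abs_deriv_G {t r ρ : ℝ} (ht : 0 < t) (hr : 0 ≤ r) (hρ : 0 ≤ ρ) (ζ : ℝ) :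
    |deriv (fun ζ' => G t r ρ ζ') ζ| = |ζ| / (2 * t) * G t r ρ ζ := by
  rw [(hasDerivAt_G t r ρ ζ).deriv, abs_mul, abs_neg, abs_div,
    abs_of_pos (by positivity : 0 < 2 * t), abs_of_nonneg (G_nonneg ht.le hr hρ)]

lemma G_eq_mul_exp_neg_mul_sq_mul_besselI1 (t r ρ ζ : ℝ) :
    G t r ρ ζ = (4 * √π * t ^ ((3 : ℝ) / 2))⁻¹ * exp (-(r ^ 2 + ζ ^ 2) / (4 * t)) *
      (exp (-(1 / (4 * t)) * ρ ^ 2) * besselI1 (r / (2 * t) * ρ)) := by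
  rw [G, show -(r ^ 2 + ρ ^ 2 + ζ ^ 2) / (4 * t)
      = -(r ^ 2 + ζ ^ 2) / (4 * t) + -(1 / (4 * t)) * ρ ^ 2 by ring, exp_add, mul_div_right_comm]
  ring

lemma integral_G_Ioi {r t : ℝ} (hr : 0 < r) (ht : 0 < t) (ζ : ℝ) :
    ∫ ρ in Ioi (0 : ℝ), G t r ρ ζ
      = (1 - exp (-r ^ 2 / (4 * t))) / (2 * √π * r * √t) * exp (-(1 / (4 * t)) * ζ ^ 2) := by
  simp only [G_eq_mul_exp_neg_mul_sq_mul_besselI1 t r _ ζ]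
  rw [integral_const_mul, integral_exp_neg_mul_sq_mul_besselI1 (by positivity) (by positivity),
    show (r / (2 * t)) ^ 2 / (4 * (1 / (4 * t))) = -(-r ^ 2 / (4 * t)) by field_simp; ring,
    show -(r ^ 2 + ζ ^ 2) / (4 * t) = -r ^ 2 / (4 * t) + -(1 / (4 * t)) * ζ ^ 2 by ring,
    exp_add, exp_neg, show t ^ ((3 : ℝ) / 2) = t * √t by
      rw [sqrt_eq_rpow, ← rpow_one_add' ht.le (by norm_num)]; norm_num]
  have := exp_pos (-r ^ 2 / (4 * t))
  have := sqrt_pos.2 ht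
  field_simp
  ring

lemma integral_integral_abs_deriv_G {r t : ℝ} (hr : 0 < r) (ht : 0 < t) :
    ∫ ζ : ℝ, ∫ ρ in Ioi (0 : ℝ), |deriv (fun ζ' => G t r ρ ζ') ζ|
      = (√π)⁻¹ / (r * √t) * (1 - exp (-r ^ 2 / (4 * t))) := by
  have h_inner : ∀ ζ, ∫ ρ in Ioi (0 : ℝ), |deriv (fun ζ' => G t r ρ ζ') ζ|
      = (1 - exp (-r ^ 2 / (4 * t))) / (2 * √π * r * √t) / (2 * t) *
        (|ζ| * exp (-(1 / (4 * t)) * ζ ^ 2)) := by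
    intro ζ
    rw [setIntegral_congr_fun measurableSet_Ioi fun ρ (hρ : 0 < ρ) => abs_deriv_G ht hr.le hρ.le ζ,
      integral_const_mul, integral_G_Ioi hr ht]
    ring
  simp only [h_inner]
  rw [integral_const_mul, integral_abs_mul_exp_neg_mul_sq (by positivity)]
  have := sqrt_pos.2 ht
  field_simp
  ring

theorem stmt13 :
    ∃ C : ℝ, 0 < C ∧ ∀ r t : ℝ, 0 < r → 0 < t →
      ∫ ζ : ℝ, ∫ ρ in Set.Ioi (0 : ℝ), |deriv (fun ζ' => G t r ρ ζ') ζ|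
        ≤ C / (r * Real.sqrt t) * (1 - Real.exp (-r ^ 2 / (4 * t))) :=
  ⟨(√π)⁻¹, by positivity, fun _ _ hr ht => (integral_integral_abs_deriv_G hr ht).le⟩
end

section
/- Let p ∈ [1, 2) and choose ε > 1/2 with 1/(1/2 + ε) < p < 1/ε and 2εp > 1. Then for every r > 0, the double integral ∫_0^∞ ∫_{-∞}^∞ (ρ r)^{-p/2} (ρ r / (|ρ - r|² + ζ²))^{εp} ρ⁻¹ dζ dρ is bounded by C r^{1-p} for a constant C = C(p, ε). -/
/-!
With `s = ε p`, the substitution `ζ = |ρ - r| t` evaluates the inner integral as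
`K |ρ - r| ^ (1 - 2 s)` with `K = ∫ (1 + t²) ^ (-s) dt`, and then `ρ = r u` evaluates the outer one
as exactly `K J r ^ (1 - p)` with `J = ∫₀^∞ u ^ (s - p/2 - 1) |u - 1| ^ (1 - 2 s) du`.
`K` converges because `s > 1/2`, and `J` converges at `0`, `1` and `∞` because `s > p/2`, `s < 1`
and `s + p/2 > 1`; so `C = K J` is a positive constant.
-/

open Real MeasureTheory

open Set

lemma integrable_one_add_sq_rpow_neg {s : ℝ} (hs : 1 / 2 < s) :
    Integrable fun t : ℝ => (1 + t ^ 2) ^ (-s) := by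
  have h := integrable_rpow_neg_one_add_norm_sq (E := ℝ) (μ := volume) (r := 2 * s)
    (by rw [Module.finrank_self, Nat.cast_one]; linarith)
  refine h.congr (ae_of_all _ fun t => ?_)
  simp only [Real.norm_eq_abs, sq_abs]
  ring_nf

lemma integral_one_add_sq_rpow_neg_pos {s : ℝ} (hs : 1 / 2 < s) :
    0 < ∫ t : ℝ, (1 + t ^ 2) ^ (-s) :=
  integral_pos_of_integrable_nonneg_nonzero (x := 0)
    ((by fun_prop : Continuous fun t : ℝ => 1 + t ^ 2).rpow_const
      fun t => Or.inl (by positivity))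
    (integrable_one_add_sq_rpow_neg hs) (fun t => by positivity) (by simp)

lemma integral_sq_add_sq_rpow_neg (s : ℝ) {c : ℝ} (hc : c ≠ 0) :
    ∫ ζ : ℝ, (c ^ 2 + ζ ^ 2) ^ (-s) = |c| ^ (1 - 2 * s) * ∫ t : ℝ, (1 + t ^ 2) ^ (-s) := by
  have hc' : 0 < |c| := abs_pos.mpr hc
  have hscale :
      ∀ t : ℝ, (c ^ 2 + (|c| * t) ^ 2) ^ (-s) = |c| ^ (-2 * s) * (1 + t ^ 2) ^ (-s) := by
    intro t
    rw [mul_pow, sq_abs, ← mul_one_add, Real.mul_rpow (by positivity) (by positivity), ← sq_abs,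
      ← Real.rpow_natCast, ← Real.rpow_mul hc'.le]
    norm_num
  have h := Measure.integral_comp_mul_left (fun ζ : ℝ => (c ^ 2 + ζ ^ 2) ^ (-s)) |c|
  simp only [hscale, integral_const_mul, abs_inv, abs_abs, smul_eq_mul] at h
  rw [eq_inv_mul_iff_mul_eq₀ hc'.ne'] at h
  rw [← h, ← mul_assoc, show 1 - 2 * s = 1 + -2 * s by ring, Real.rpow_add hc', Real.rpow_one]

lemma intervalIntegrable_abs_rpow {t : ℝ} (ht : -1 < t) (a b : ℝ) :
    IntervalIntegrable (fun v : ℝ => |v| ^ t) volume a b := by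
  have hpos : ∀ c, 0 ≤ c → IntervalIntegrable (fun v : ℝ => |v| ^ t) volume 0 c := by
    intro c hc
    refine (intervalIntegral.intervalIntegrable_rpow' ht).congr ?_
    rw [uIoc_of_le hc]
    intro v hv
    simp [abs_of_pos hv.1]
  have hall : ∀ c, IntervalIntegrable (fun v : ℝ => |v| ^ t) volume 0 c := by
    intro c
    rcases le_total 0 c with hc | hc
    · exact hpos c hc
    · rw [IntervalIntegrable.iff_comp_neg]
      simpa using hpos (-c) (by linarith)
  exact (hall a).symm.trans (hall b)

lemma integrableOn_Ioi_rpow_mul_abs_sub_one_rpow {a t : ℝ} (ha : -1 < a) (ht : -1 < t)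
    (hat : a + t < -1) :
    IntegrableOn (fun u : ℝ => u ^ a * |u - 1| ^ t) (Ioi 0) := by
  have ht0 : t < 0 := by linarith
  have hnear0 : IntegrableOn (fun u : ℝ => u ^ a * |u - 1| ^ t) (Ioc 0 (1 / 2)) := by
    refine IntegrableOn.mul_continuousOn_of_subset
      (intervalIntegral.intervalIntegrable_rpow' ha).1 ?_ measurableSet_Ioc isCompact_Icc
      Ioc_subset_Icc_self
    refine ((continuous_sub_right 1).abs.continuousOn).rpow_const fun u hu => Or.inl ?_
    rw [abs_ne_zero]
    linarith [hu.2]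
  have hnear1 : IntegrableOn (fun u : ℝ => u ^ a * |u - 1| ^ t) (Ioc (1 / 2) 2) := by
    refine IntegrableOn.continuousOn_mul_of_subset ?_ ?_ isCompact_Icc measurableSet_Ioc
      Ioc_subset_Icc_self
    · exact continuousOn_id.rpow_const fun u hu => Or.inl (by linarith [hu.1] : (0 : ℝ) < u).ne'
    · have h := (intervalIntegrable_abs_rpow ht (1 / 2 - 1) (2 - 1)).comp_sub_right 1
      simp only [sub_add_cancel] at h
      exact h.1
  have hfar : IntegrableOn (fun u : ℝ => u ^ a * |u - 1| ^ t) (Ioi 2) := by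
    refine ((integrableOn_Ioi_rpow_of_lt hat two_pos).const_mul (2 ^ (-t))).mono'
      (by fun_prop) ?_
    filter_upwards [ae_restrict_mem measurableSet_Ioi] with u hu
    have hu : 2 < u := hu
    have hhalf : (u - 1) ^ t ≤ (u / 2) ^ t :=
      Real.rpow_le_rpow_of_nonpos (by linarith) (by linarith) ht0.le
    rw [Real.norm_of_nonneg (by positivity), abs_of_pos (by linarith), Real.rpow_add (by linarith),
      ← mul_assoc, mul_comm _ (u ^ a), mul_assoc]
    refine mul_le_mul_of_nonneg_left (hhalf.trans_eq ?_) (by positivity)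
    rw [Real.div_rpow (by linarith) two_pos.le, Real.rpow_neg two_pos.le]
    ring
  rw [← Ioc_union_Ioi_eq_Ioi (by norm_num : (0 : ℝ) ≤ 2),
    ← Ioc_union_Ioc_eq_Ioc (by norm_num : (0 : ℝ) ≤ 1 / 2) (by norm_num)]
  exact (hnear0.union hnear1).union hfar

lemma setIntegral_Ioi_rpow_mul_abs_sub_one_rpow_pos {a t : ℝ} (ha : -1 < a) (ht : -1 < t)
    (hat : a + t < -1) :
    0 < ∫ u in Ioi (0 : ℝ), u ^ a * |u - 1| ^ t := by
  rw [setIntegral_pos_iff_support_of_nonneg_ae _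
    (integrableOn_Ioi_rpow_mul_abs_sub_one_rpow ha ht hat)]
  · refine lt_of_lt_of_le (by simp) (measure_mono (s := Ioo 0 1) fun u hu => ⟨?_, hu.1⟩)
    rw [Function.mem_support]
    have : 0 < |u - 1| := by rw [abs_pos]; linarith [hu.2]
    exact (mul_pos (Real.rpow_pos_of_pos hu.1 a) (Real.rpow_pos_of_pos this t)).ne'
  · filter_upwards [ae_restrict_mem measurableSet_Ioi] with u hu
    exact mul_nonneg (Real.rpow_nonneg (le_of_lt hu) _) (Real.rpow_nonneg (abs_nonneg _) _)

lemma integral_Ioi_rpow_mul_abs_sub_rpow (a t : ℝ) {r : ℝ} (hr : 0 < r) :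
    ∫ ρ in Ioi 0, ρ ^ a * |ρ - r| ^ t = r ^ (a + t + 1) * ∫ u in Ioi 0, u ^ a * |u - 1| ^ t := by
  have h := integral_comp_mul_left_Ioi (fun ρ : ℝ => ρ ^ a * |ρ - r| ^ t) 0 hr
  rw [mul_zero, smul_eq_mul, eq_inv_mul_iff_mul_eq₀ hr.ne'] at h
  rw [← h, setIntegral_congr_fun measurableSet_Ioi fun u (hu : 0 < u) => ?_,
    integral_const_mul, ← mul_assoc, Real.rpow_add_one hr.ne', mul_comm r]
  rw [← mul_sub_one, abs_mul, abs_of_pos hr, Real.mul_rpow hr.le hu.le,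
    Real.mul_rpow hr.le (abs_nonneg _), Real.rpow_add hr]
  ring

lemma integral_rpow_mul_div_sq_add_sq_rpow (b s : ℝ) {ρ r : ℝ} (hρ : 0 < ρ) (hr : 0 < r)
    (hne : ρ ≠ r) :
    ∫ ζ : ℝ, (ρ * r) ^ b * (ρ * r / ((ρ - r) ^ 2 + ζ ^ 2)) ^ s * ρ⁻¹
      = (∫ t : ℝ, (1 + t ^ 2) ^ (-s)) * r ^ (b + s)
          * (ρ ^ (b + s - 1) * |ρ - r| ^ (1 - 2 * s)) := by
  have hρr : 0 < ρ * r := mul_pos hρ hr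
  have hsplit : ∀ ζ : ℝ, (ρ * r) ^ b * (ρ * r / ((ρ - r) ^ 2 + ζ ^ 2)) ^ s * ρ⁻¹
      = ((ρ * r) ^ (b + s) * ρ⁻¹) * ((ρ - r) ^ 2 + ζ ^ 2) ^ (-s) := by
    intro ζ
    rw [Real.div_rpow hρr.le (by positivity), Real.rpow_neg (by positivity), Real.rpow_add hρr]
    ring
  simp only [hsplit, integral_const_mul, integral_sq_add_sq_rpow_neg s (sub_ne_zero.mpr hne)]
  rw [Real.mul_rpow hρ.le hr.le, Real.rpow_sub_one hρ.ne', div_eq_mul_inv]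
  ring

lemma integral_Ioi_integral_rpow_mul_div_sq_add_sq_rpow (b s : ℝ) {r : ℝ} (hr : 0 < r) :
    ∫ ρ in Ioi 0, ∫ ζ : ℝ, (ρ * r) ^ b * (ρ * r / ((ρ - r) ^ 2 + ζ ^ 2)) ^ s * ρ⁻¹
      = (∫ t : ℝ, (1 + t ^ 2) ^ (-s)) * (∫ u in Ioi 0, u ^ (b + s - 1) * |u - 1| ^ (1 - 2 * s))
          * r ^ (2 * b + 1) := by
  have hne : ∀ᵐ ρ ∂volume.restrict (Ioi (0 : ℝ)), ρ ≠ r :=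
    ae_restrict_of_ae (measure_eq_zero_iff_ae_notMem.mp (measure_singleton r))
  rw [integral_congr_ae (g := fun ρ => (∫ t : ℝ, (1 + t ^ 2) ^ (-s)) * r ^ (b + s)
      * (ρ ^ (b + s - 1) * |ρ - r| ^ (1 - 2 * s)))]
  · rw [integral_const_mul, integral_Ioi_rpow_mul_abs_sub_rpow _ _ hr,
      show 2 * b + 1 = (b + s) + (b + s - 1 + (1 - 2 * s) + 1) by ring, Real.rpow_add hr (b + s)]
    ring
  · filter_upwards [ae_restrict_mem measurableSet_Ioi, hne] with ρ hρ hρr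
    exact integral_rpow_mul_div_sq_add_sq_rpow b s hρ hr hρr

theorem stmt16_general (p ε : ℝ) (hε : 1 / 2 < ε)
    (h1 : 1 / (1 / 2 + ε) < p) (h2 : p < 1 / ε) (h3 : 1 < 2 * ε * p) :
    ∃ C : ℝ, 0 < C ∧ ∀ r : ℝ, 0 < r →
      ∫ ρ in Set.Ioi (0 : ℝ), ∫ ζ : ℝ,
          (ρ * r) ^ (-p / 2) * (ρ * r / ((ρ - r) ^ 2 + ζ ^ 2)) ^ (ε * p) * ρ⁻¹
        ≤ C * r ^ (1 - p) := by
  have hp : 0 < p := pos_of_mul_pos_right (by linarith : 0 < 2 * ε * p) (by linarith)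
  have hs₀ : 1 / 2 < ε * p := by linarith
  have hs₁ : ε * p < 1 := by rwa [lt_div_iff₀ (by linarith), mul_comm] at h2
  have htail : 1 < p * (1 / 2 + ε) := by rwa [div_lt_iff₀ (by linarith)] at h1
  have hK := integral_one_add_sq_rpow_neg_pos hs₀
  have hJ := setIntegral_Ioi_rpow_mul_abs_sub_one_rpow_pos
    (a := -p / 2 + ε * p - 1) (t := 1 - 2 * (ε * p)) (by nlinarith) (by linarith) (by linarith)
  refine ⟨_, mul_pos hK hJ, fun r hr => ?_⟩
  rw [integral_Ioi_integral_rpow_mul_div_sq_add_sq_rpow _ _ hr,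
    show 2 * (-p / 2) + 1 = 1 - p by ring]

theorem stmt16 (p ε : ℝ) (hp1 : 1 ≤ p) (hp2 : p < 2) (hε : 1 / 2 < ε)
    (h1 : 1 / (1 / 2 + ε) < p) (h2 : p < 1 / ε) (h3 : 1 < 2 * ε * p) :
    ∃ C : ℝ, 0 < C ∧ ∀ r : ℝ, 0 < r →
      ∫ ρ in Set.Ioi (0 : ℝ), ∫ ζ : ℝ,
          (ρ * r) ^ (-p / 2) * (ρ * r / ((ρ - r) ^ 2 + ζ ^ 2)) ^ (ε * p) * ρ⁻¹
        ≤ C * r ^ (1 - p) :=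
  stmt16_general p ε hε h1 h2 h3
end
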